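/- In the Lie algebra T with bracket [T(r),T(s)] = (Br|s)(T(r+s) - T(r) - T(s)), for q ≥ 2 one has [T(r), T_q(s; r_1,…,r_q)] = -(Br|s) T_{q+1}(s; r, r_1,…,r_q) + Σ_{i=1}^{q} (Br|r_i) T_q(s+r_i; r_1,…,ŕ_i,…,r_q, r). -/
import Mathlib

open Matrix

/-- The bilinear form `(Br | s)`. -/
noncomputable def dotB {N : ℕ} (B : Matrix (Fin N) (Fin N) ℂ)
    (r s : Fin N → ℤ) : ℂ :=
  (B *ᵥ (fun i => (r i : ℂ))) ⬝ᵥ (fun i => (s i : ℂ))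

/-- The element `T(r)` (with the convention `T(0) = 0`). -/
noncomputable def TT {N : ℕ} (r : Fin N → ℤ) : (Fin N → ℤ) →₀ ℂ :=
  Finsupp.single r 1 - Finsupp.single 0 1

/-- `T_q(s; r_1, …, r_q) = Σ_{I ⊆ {1,…,q}} (-1)^{|I|} T(s + Σ_{i∈I} r_i)`. -/
noncomputable def Tq {N : ℕ} (q : ℕ) (s : Fin N → ℤ) (r : Fin q → (Fin N → ℤ)) :
    (Fin N → ℤ) →₀ ℂ :=
  ∑ I : Finset (Fin q), ((-1 : ℂ) ^ I.card) • TT (s + ∑ i ∈ I, r i)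

/-- The bracket of `T(r)` with a general element, extended linearly:
`[T(r), T(s)] = (Br|s)(T(r+s) - T(r) - T(s))`. -/
noncomputable def brT {N : ℕ} (B : Matrix (Fin N) (Fin N) ℂ)
    (r : Fin N → ℤ) (x : (Fin N → ℤ) →₀ ℂ) : (Fin N → ℤ) →₀ ℂ :=
  x.sum fun s c => c • (dotB B r s • (TT (r + s) - TT r - TT s))

namespace BT

/-! ### Auxiliary definitions: subsets as boolean vectors -/

def sgn {q : ℕ} (c : Fin q → Bool) : ℂ := ∏ i, if c i then (-1 : ℂ) else 1

def sel {N q : ℕ} (c : Fin q → Bool) (rv : Fin q → (Fin N → ℤ)) : Fin N → ℤ :=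
  ∑ i, if c i then rv i else 0

def finsetBoolEquiv {q : ℕ} : (Fin q → Bool) ≃ Finset (Fin q) where
  toFun c := Finset.univ.filter fun i => c i = true
  invFun I := fun i => decide (i ∈ I)
  left_inv c := by funext i; simp
  right_inv I := by ext i; simp

theorem Tq_eq {N : ℕ} (q : ℕ) (s : Fin N → ℤ) (rv : Fin q → (Fin N → ℤ)) :
    Tq q s rv = ∑ c : Fin q → Bool, sgn c • TT (s + sel c rv) := by
  rw [Tq, ← Equiv.sum_comp (finsetBoolEquiv (q := q))
    (fun I => ((-1 : ℂ) ^ I.card) • TT (s + ∑ i ∈ I, rv i))]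
  refine Finset.sum_congr rfl fun c _ => ?_
  have h1 : sgn c = ((-1 : ℂ)) ^ (finsetBoolEquiv c).card := by
    rw [sgn, show (finsetBoolEquiv c) = Finset.univ.filter (fun i => c i = true) from rfl,
      ← Finset.prod_const, Finset.prod_filter]
  have h2 : (∑ i ∈ finsetBoolEquiv c, rv i) = sel c rv := by
    rw [show (finsetBoolEquiv c) = Finset.univ.filter (fun i => c i = true) from rfl,
      Finset.sum_filter, sel]
  rw [h1, h2]

theorem sum_split {M : Type*} [AddCommMonoid M] (q : ℕ) (p : Fin (q + 1))
    (f : (Fin (q + 1) → Bool) → M) :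
    ∑ c : Fin (q + 1) → Bool, f c
      = ∑ c : Fin q → Bool, (f (p.insertNth true c) + f (p.insertNth false c)) := by
  rw [← Equiv.sum_comp (Fin.insertNthEquiv (fun _ => Bool) p) f, Fintype.sum_prod_type,
    Fintype.sum_bool, ← Finset.sum_add_distrib]
  simp [Fin.insertNthEquiv]

theorem sgn_insertNth {q : ℕ} (p : Fin (q + 1)) (b : Bool) (c : Fin q → Bool) :
    sgn (p.insertNth b c) = (if b then (-1 : ℂ) else 1) * sgn c := by
  rw [sgn, Fin.prod_univ_succAbove _ p]
  simp [sgn]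

theorem sel_insertNth {N q : ℕ} (p : Fin (q + 1)) (b : Bool) (c : Fin q → Bool)
    (rv : Fin (q + 1) → (Fin N → ℤ)) :
    sel (p.insertNth b c) rv = (if b then rv p else 0) + sel c (rv ∘ p.succAbove) := by
  rw [sel, Fin.sum_univ_succAbove _ p]
  simp [sel]

theorem sgn_sum_zero (q : ℕ) : ∑ c : Fin (q + 1) → Bool, sgn c = 0 := by
  rw [sum_split q 0]
  simp only [sgn_insertNth]
  simp

theorem sgn_sum_mem_zero (q : ℕ) (i : Fin (q + 2)) :
    ∑ c : Fin (q + 2) → Bool, (if c i then sgn c else 0) = 0 := by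
  rw [sum_split (q + 1) i]
  simp only [Fin.insertNth_apply_same, if_true, if_false, Bool.false_eq_true, add_zero,
    sgn_insertNth, ite_true]
  simp [neg_one_mul, Finset.sum_neg_distrib, sgn_sum_zero q]

variable {N : ℕ} (B : Matrix (Fin N) (Fin N) ℂ) (r : Fin N → ℤ)

theorem dotB_zero_right : dotB B r 0 = 0 := by
  simp [dotB, dotProduct]

theorem dotB_add_right (a b : Fin N → ℤ) :
    dotB B r (a + b) = dotB B r a + dotB B r b := by
  simp [dotB, dotProduct, Pi.add_apply, Int.cast_add, mul_add, Finset.sum_add_distrib]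

theorem dotB_sum_right {ι : Type*} (t : Finset ι) (g : ι → (Fin N → ℤ)) :
    dotB B r (∑ i ∈ t, g i) = ∑ i ∈ t, dotB B r (g i) := by
  induction t using Finset.cons_induction with
  | empty => simp [dotB_zero_right]
  | cons a t ha ih => simp [Finset.sum_cons, dotB_add_right, ih]

theorem dotB_ite_right (p : Prop) [Decidable p] (a : Fin N → ℤ) :
    dotB B r (if p then a else 0) = if p then dotB B r a else 0 := by
  split <;> simp [dotB_zero_right]

theorem brT_eq (x : (Fin N → ℤ) →₀ ℂ) :
    brT B r x = Finsupp.linearCombination ℂ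
      (fun a => dotB B r a • (TT (r + a) - TT r - TT a)) x := rfl

theorem brT_TT (a : Fin N → ℤ) :
    brT B r (TT a) = dotB B r a • (TT (r + a) - TT r - TT a) := by
  have key : ∀ (v : (Fin N → ℤ) → ((Fin N → ℤ) →₀ ℂ)) (b : Fin N → ℤ),
      Finsupp.linearCombination ℂ v (TT b) = v b - v 0 := by
    intro v b
    rw [TT, map_sub, Finsupp.linearCombination_single, Finsupp.linearCombination_single,
      one_smul, one_smul]
  rw [brT_eq, key, dotB_zero_right, zero_smul, sub_zero]

theorem brT_sum_smul_TT {ι : Type*} [Fintype ι] (e : ι → ℂ) (u : ι → (Fin N → ℤ)) :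
    brT B r (∑ c : ι, e c • TT (u c))
      = ∑ c : ι, e c • (dotB B r (u c) • (TT (r + u c) - TT r - TT (u c))) := by
  rw [brT_eq, map_sum]
  refine Finset.sum_congr rfl fun c _ => ?_
  rw [_root_.map_smul, ← brT_eq, brT_TT]

end BT

open BT

set_option maxHeartbeats 1000000

theorem bracket_T_Tq (N : ℕ) (B : Matrix (Fin N) (Fin N) ℂ) (hB : Bᵀ = -B)
    (k : ℕ) (r s : Fin N → ℤ) (rs : Fin (k + 2) → (Fin N → ℤ)) :
    brT B r (Tq (k + 2) s rs)
      = -(dotB B r s) • Tq (k + 3) s (Fin.cons r rs)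
        + ∑ i : Fin (k + 2),
            dotB B r (rs i) •
              Tq (k + 2) (s + rs i) (Fin.snoc (rs ∘ i.succAbove) r) := by
  clear hB
  -- coefficient expansion
  have hd : ∀ c : Fin (k+2) → Bool, dotB B r (s + sel c rs)
      = dotB B r s + ∑ i, (if c i then dotB B r (rs i) else 0) := by
    intro c
    rw [dotB_add_right, sel, dotB_sum_right]
    exact congrArg _ (Finset.sum_congr rfl fun i _ => dotB_ite_right B r _ _)
  -- total scalar coefficient vanishes
  have hz : ∑ c : Fin (k+2) → Bool, sgn c * dotB B r (s + sel c rs) = 0 := by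
    calc ∑ c : Fin (k+2) → Bool, sgn c * dotB B r (s + sel c rs)
        = ∑ c : Fin (k+2) → Bool, (sgn c * dotB B r s
            + ∑ i, (if c i then sgn c else 0) * dotB B r (rs i)) := by
          refine Finset.sum_congr rfl fun c _ => ?_
          rw [hd c, mul_add, Finset.mul_sum]
          congr 1
          exact Finset.sum_congr rfl fun i _ => by
            rw [mul_ite, mul_zero, ite_mul, zero_mul]
      _ = (∑ c : Fin (k+2) → Bool, sgn c) * dotB B r s
          + ∑ i : Fin (k+2), ∑ c : Fin (k+2) → Bool,
              (if c i then sgn c else 0) * dotB B r (rs i) := by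
          rw [Finset.sum_add_distrib, Finset.sum_mul, Finset.sum_comm]
      _ = 0 := by
          rw [sgn_sum_zero (k+1), zero_mul, zero_add]
          refine Finset.sum_eq_zero fun i _ => ?_
          rw [← Finset.sum_mul, sgn_sum_mem_zero k i, zero_mul]
  -- Step 1: the bracket as a sum
  have h1 : brT B r (Tq (k+2) s rs)
      = ∑ c : Fin (k+2) → Bool, (sgn c * dotB B r (s + sel c rs)) •
          (TT (r + (s + sel c rs)) - TT (s + sel c rs))
        - (∑ c : Fin (k+2) → Bool, sgn c * dotB B r (s + sel c rs)) • TT r := by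
    rw [Tq_eq, brT_sum_smul_TT, Finset.sum_smul, ← Finset.sum_sub_distrib]
    refine Finset.sum_congr rfl fun c _ => ?_
    rw [smul_smul, sub_right_comm, smul_sub]
  rw [h1, hz, zero_smul, sub_zero]
  -- Step 2: expand the coefficient
  have h2 : ∑ c : Fin (k+2) → Bool, (sgn c * dotB B r (s + sel c rs)) •
          (TT (r + (s + sel c rs)) - TT (s + sel c rs))
      = dotB B r s • ∑ c : Fin (k+2) → Bool,
          sgn c • (TT (r + (s + sel c rs)) - TT (s + sel c rs))
        + ∑ i : Fin (k+2), dotB B r (rs i) • ∑ c : Fin (k+2) → Bool,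
            (if c i then sgn c else 0) •
              (TT (r + (s + sel c rs)) - TT (s + sel c rs)) := by
    calc ∑ c : Fin (k+2) → Bool, (sgn c * dotB B r (s + sel c rs)) •
            (TT (r + (s + sel c rs)) - TT (s + sel c rs))
        = ∑ c : Fin (k+2) → Bool,
            ((dotB B r s * sgn c) • (TT (r + (s + sel c rs)) - TT (s + sel c rs))
              + ∑ i : Fin (k+2), (dotB B r (rs i) * (if c i then sgn c else 0)) •
                  (TT (r + (s + sel c rs)) - TT (s + sel c rs))) := by
          refine Finset.sum_congr rfl fun c _ => ?_
          have hco : sgn c * dotB B r (s + sel c rs)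
              = dotB B r s * sgn c
                + ∑ i : Fin (k+2), dotB B r (rs i) * (if c i then sgn c else 0) := by
            rw [hd c, mul_add]
            congr 1
            · exact mul_comm _ _
            · rw [Finset.mul_sum]
              exact Finset.sum_congr rfl fun i _ => by cases hci : c i <;> simp [mul_comm]
          rw [hco, add_smul, Finset.sum_smul]
      _ = _ := by
          rw [Finset.sum_add_distrib, Finset.sum_comm]
          congr 1
          · rw [Finset.smul_sum]
            exact Finset.sum_congr rfl fun c _ => (mul_smul _ _ _)
          · refine Finset.sum_congr rfl fun i _ => ?_
            rw [Finset.smul_sum]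
            exact Finset.sum_congr rfl fun c _ => (mul_smul _ _ _)
  rw [h2]
  -- Step 3: the i-th summand
  have h3 : ∀ i : Fin (k+2), ∑ c : Fin (k+2) → Bool,
        (if c i then sgn c else 0) • (TT (r + (s + sel c rs)) - TT (s + sel c rs))
      = ∑ c : Fin (k+1) → Bool, sgn c •
          (TT (s + rs i + sel c (rs ∘ i.succAbove))
            - TT (r + (s + rs i + sel c (rs ∘ i.succAbove)))) := by
    intro i
    rw [sum_split (k+1) i]
    refine Finset.sum_congr rfl fun c _ => ?_
    rw [Fin.insertNth_apply_same, Fin.insertNth_apply_same]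
    simp only [if_true, Bool.false_eq_true, if_false, zero_smul, add_zero]
    rw [sgn_insertNth, sel_insertNth]
    simp only [if_true, Bool.false_eq_true, if_false]
    have ha : s + (rs i + sel c (rs ∘ i.succAbove)) = s + rs i + sel c (rs ∘ i.succAbove) := by
      rw [add_assoc]
    rw [ha, neg_one_mul, neg_smul, ← smul_neg, neg_sub]
  -- Step 4: RHS first Tq
  have hR1 : Tq (k+3) s (Fin.cons r rs)
      = ∑ c : Fin (k+2) → Bool,
          (sgn c • TT (s + sel c rs) - sgn c • TT (r + (s + sel c rs))) := by
    rw [Tq_eq, sum_split (k+2) 0]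
    refine Finset.sum_congr rfl fun c _ => ?_
    have hcomp : (Fin.cons r rs : Fin (k+3) → (Fin N → ℤ)) ∘ (0 : Fin (k+3)).succAbove = rs := by
      funext j
      simp [Fin.zero_succAbove]
    rw [sgn_insertNth, sel_insertNth, sgn_insertNth, sel_insertNth, hcomp]
    simp only [if_true, Bool.false_eq_true, if_false, Fin.cons_zero, one_mul, zero_add,
      neg_one_mul, neg_smul]
    rw [show s + (r + sel c rs) = r + (s + sel c rs) from by abel]
    abel
  -- Step 5: RHS second Tq
  have hR2 : ∀ i : Fin (k+2), Tq (k+2) (s + rs i) (Fin.snoc (rs ∘ i.succAbove) r)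
      = ∑ c : Fin (k+1) → Bool,
          (sgn c • TT (s + rs i + sel c (rs ∘ i.succAbove))
            - sgn c • TT (r + (s + rs i + sel c (rs ∘ i.succAbove)))) := by
    intro i
    rw [Tq_eq, sum_split (k+1) (Fin.last (k+1))]
    refine Finset.sum_congr rfl fun c _ => ?_
    have hcomp : (Fin.snoc (rs ∘ i.succAbove) r : Fin (k+2) → (Fin N → ℤ))
        ∘ (Fin.last (k+1)).succAbove = rs ∘ i.succAbove := by
      funext j
      simp [Fin.succAbove_last]
    rw [sgn_insertNth, sel_insertNth, sgn_insertNth, sel_insertNth, hcomp]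
    simp only [if_true, Bool.false_eq_true, if_false, Fin.snoc_last, one_mul, zero_add,
      neg_one_mul, neg_smul]
    rw [show s + rs i + (r + sel c (rs ∘ i.succAbove))
        = r + (s + rs i + sel c (rs ∘ i.succAbove)) from by abel]
    abel
  rw [hR1]
  -- assemble
  congr 1
  · rw [neg_smul, ← smul_neg, ← Finset.sum_neg_distrib]
    congr 1
    refine Finset.sum_congr rfl fun c _ => ?_
    rw [smul_sub]
    abel
  · refine Finset.sum_congr rfl fun i _ => ?_
    rw [h3 i, hR2 i]
    congr 1
    exact Finset.sum_congr rfl fun c _ => (smul_sub _ _ _)
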